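/- arXiv:1308.5722 — 7 statements merged into one kernel-verified Lean document; each statement's English description precedes it below -/
import Mathlib

section
/- Let A, η, γ, s be complex numbers with A ≠ 0. Then the determinant of the 3×3 complex matrix with rows (A(1−ηs), 0, A+η), ((1−η)As, 1−A, η−1), (−(1−γ)(1−η)s, −γ, 1−(1−γ)ηA⁻¹) equals −(A−(1−γ))·(A − η − ((2η−1)A − η)s). -/
open Complex

/-- determinant identity for the AMP interface-condition matrix. -/
theorem amp_matrix_det (A η γ s : ℂ) (hA : A ≠ 0) :
    Matrix.det !![A * (1 - η * s), 0, A + η;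
                  (1 - η) * A * s, 1 - A, η - 1;
                  -(1 - γ) * (1 - η) * s, -γ, 1 - (1 - γ) * η * A⁻¹] =
      -(A - (1 - γ)) * (A - η - ((2 * η - 1) * A - η) * s) := by
  rw [Matrix.det_fin_three]
  simp only [Matrix.of_apply, Matrix.cons_val', Matrix.cons_val_zero, Matrix.cons_val_one,
    Matrix.cons_val_two, Matrix.tail_cons, Matrix.empty_val', Matrix.cons_val_fin_one,
    Matrix.vecHead]
  field_simp
  ring
end

section
/- Let η, s be complex numbers, let γ be a real number with 0 ≤ γ ≤ 2, and let A be a complex number with |A| > 1. Then the determinant of the 3×3 complex matrix with rows (A(1−ηs), 0, A+η), ((1−η)As, 1−A, η−1), (−(1−γ)(1−η)s, −γ, 1−(1−γ)ηA⁻¹) vanishes if and only if A − η − ((2η−1)A − η)s = 0. -/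
open Complex

/-!
Expanding along the first row, the determinant factors as `-(A - 1 + γ) * f(A)`. The first factor
vanishes only at `A = 1 - γ`, which lies in the closed unit disc when `0 ≤ γ ≤ 2`; so for `|A| > 1`
the determinant vanishes exactly when `f(A)` does.
-/

theorem amp_matrix_det_eq_mul {K : Type*} [Field K] (η s γ A : K) (hA : A ≠ 0) :
    Matrix.det !![A * (1 - η * s), 0, A + η;
                  (1 - η) * A * s, 1 - A, η - 1;
                  -(1 - γ) * (1 - η) * s, -γ, 1 - (1 - γ) * η * A⁻¹] =
      -(A - 1 + γ) * (A - η - ((2 * η - 1) * A - η) * s) := by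
  rw [Matrix.det_fin_three]
  simp only [Matrix.of_apply, Matrix.cons_val', Matrix.cons_val_zero, Matrix.cons_val_one,
    Matrix.cons_val_two, Matrix.empty_val', Matrix.cons_val_fin_one, Matrix.head_cons,
    Matrix.head_fin_const, Matrix.tail_cons]
  field_simp
  ring

theorem ne_one_sub_ofReal_of_one_lt_norm {γ : ℝ} (hγ0 : 0 ≤ γ) (hγ2 : γ ≤ 2) {A : ℂ}
    (hA : 1 < ‖A‖) : A ≠ 1 - γ := by
  rintro rfl
  have : ‖(1 : ℂ) - γ‖ ≤ 1 := by
    rw [← ofReal_one, ← ofReal_sub, norm_real, Real.norm_eq_abs]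
    exact abs_le.mpr ⟨by linarith, by linarith⟩
  linarith

/-- for `0 ≤ γ ≤ 2` and `|A| > 1`, the AMP interface matrix is singular
iff the AMP stability function vanishes. -/
theorem amp_matrix_det_eq_zero_iff (η s : ℂ) (γ : ℝ) (hγ0 : 0 ≤ γ) (hγ2 : γ ≤ 2)
    (A : ℂ) (hA : 1 < ‖A‖) :
    Matrix.det !![A * (1 - η * s), 0, A + η;
                  (1 - η) * A * s, 1 - A, η - 1;
                  -(1 - (γ : ℂ)) * (1 - η) * s, -(γ : ℂ), 1 - (1 - (γ : ℂ)) * η * A⁻¹] = 0 ↔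
      A - η - ((2 * η - 1) * A - η) * s = 0 := by
  have hA0 : A ≠ 0 := norm_pos_iff.mp (one_pos.trans hA)
  have hfactor : A - 1 + γ ≠ 0 := fun h =>
    ne_one_sub_ofReal_of_one_lt_norm hγ0 hγ2 hA (by linear_combination h)
  rw [amp_matrix_det_eq_mul η s γ A hA0, neg_mul, neg_eq_zero, mul_eq_zero, or_iff_right hfactor]
end

section
/- Let A, λx, λy be complex numbers with A ≠ 1 and λy ≠ 0; set r = (A−1+λy)/λy, θ = −A·λx²/(2·λy·(A−1)), R = r − θ, and assume R ≠ 0. Suppose sequences â, b̂, d̂ : ℕ → ℂ satisfy A·â_j = â_j − λy(â_j − â_{j−1}) − iλx·d̂_j for all j ≥ 1, A·b̂_j = b̂_j + λy(b̂_{j+1} − b̂_j) + iλx·d̂_j for all j ≥ 0, and A·d̂_j = d̂_j + (iλx/2)·A·(b̂_j − â_j) for all j ≥ 0. Then for all j ≥ 1: â_j = ((1−θ²)/R)·â_{j−1} − θ·b̂_{j−1} and b̂_j = θ·â_{j−1} + R·b̂_{j−1}. -/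
open Complex

/-!
Eliminating the interior unknown `d̂`: the third equation gives
`i λx d̂_j = λy θ (b̂_j − â_j)`, so the first two become first-order relations between
consecutive values of `â` and `b̂` with coefficients `λy R = A − 1 + λy − λy θ` and `λy θ`.
Solving the `b̂`-equation forward gives `b̂_{j+1}`; the `â`-equation gives
`R â_{j+1} = â_j − θ b̂_{j+1}`, and substituting `b̂_{j+1}` yields the first row of `K`.
-/

section NormalMode

variable {A lx ly θ R : ℂ}

theorem I_mul_lx_mul_d_eq {a b d : ℂ} (hA : A ≠ 1) (hly : ly ≠ 0)
    (hθ : θ = -(A * lx ^ 2) / (2 * ly * (A - 1)))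
    (hd : A * d = d + (I * lx / 2) * A * (b - a)) :
    I * lx * d = ly * θ * (b - a) := by
  have hA1 : 2 * (A - 1) ≠ 0 := mul_ne_zero two_ne_zero (sub_ne_zero.mpr hA)
  have hlyθ : 2 * (A - 1) * (ly * θ) = -(A * lx ^ 2) := by
    rw [hθ]; field_simp
  refine mul_left_cancel₀ hA1 ?_
  linear_combination (2 * I * lx) * hd - (b - a) * hlyθ + (A * lx ^ 2 * (b - a)) * I_sq

theorem ly_mul_R_eq {r : ℂ} (hly : ly ≠ 0) (hr : r = (A - 1 + ly) / ly)
    (hR : R = r - θ) : ly * R = A - 1 + ly - ly * θ := by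
  rw [hR, hr]; field_simp

theorem b_next_eq {a b b' c : ℂ} (hly : ly ≠ 0) (hR : ly * R = A - 1 + ly - ly * θ)
    (hc : c = ly * θ * (b - a)) (hb : A * b = b + ly * (b' - b) + c) :
    b' = θ * a + R * b :=
  mul_left_cancel₀ hly <| by linear_combination -hb - hc - b * hR

theorem R_mul_a_next_eq {a a' b' c : ℂ} (hly : ly ≠ 0) (hR : ly * R = A - 1 + ly - ly * θ)
    (hc : c = ly * θ * (b' - a')) (ha : A * a' = a' - ly * (a' - a) - c) :
    R * a' = a - θ * b' :=
  mul_left_cancel₀ hly <| by linear_combination ha - hc + a' * hR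

end NormalMode

/-- the normal-mode difference equations for the upwind-discretized
acoustic solid imply the two-term transfer-matrix recursion for `(â_j, b̂_j)`.
Here `lx` and `ly` denote `λx = c̄_p·k·Δt` and `λy = c̄_p·Δt/Δy`. -/
theorem solid_transfer_recursion (A lx ly : ℂ) (hA : A ≠ 1) (hly : ly ≠ 0)
    (r θ R : ℂ)
    (hr : r = (A - 1 + ly) / ly)
    (hθ : θ = -(A * lx ^ 2) / (2 * ly * (A - 1)))
    (hR : R = r - θ) (hRne : R ≠ 0)
    (a b d : ℕ → ℂ)
    (ha : ∀ j : ℕ, A * a (j + 1) = a (j + 1) - ly * (a (j + 1) - a j) - I * lx * d (j + 1))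
    (hb : ∀ j : ℕ, A * b j = b j + ly * (b (j + 1) - b j) + I * lx * d j)
    (hd : ∀ j : ℕ, A * d j = d j + (I * lx / 2) * A * (b j - a j)) :
    ∀ j : ℕ,
      a (j + 1) = ((1 - θ ^ 2) / R) * a j - θ * b j ∧
      b (j + 1) = θ * a j + R * b j := by
  have hlyR := ly_mul_R_eq hly hr hR
  have hcoupling (j : ℕ) := I_mul_lx_mul_d_eq hA hly hθ (hd j)
  intro j
  have hbj := b_next_eq hly hlyR (hcoupling j) (hb j)
  have haj := R_mul_a_next_eq hly hlyR (hcoupling (j + 1)) (ha j)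
  refine ⟨?_, hbj⟩
  rw [div_mul_eq_mul_div, eq_sub_iff_add_eq, eq_div_iff hRne]
  linear_combination haj - θ * hbj
end

section
/- Let A, λx, λy be complex numbers with A ≠ 1 and λy ≠ 0; set r = (A−1+λy)/λy, θ = −A·λx²/(2·λy·(A−1)), R = r − θ, B = (R + (1−θ²)/R)/2, and assume θ ≠ 0 and R ≠ 0. Let φs, φb be complex numbers with φs + φb = 2B, φs·φb = 1, and |φs| < 1 < |φb|, and set Q = (φb − R)/θ. Suppose sequences â, b̂, d̂ : ℕ → ℂ satisfy A·â_j = â_j − λy(â_j − â_{j−1}) − iλx·d̂_j for all j ≥ 1, A·b̂_j = b̂_j + λy(b̂_{j+1} − b̂_j) + iλx·d̂_j for all j ≥ 0, A·d̂_j = d̂_j + (iλx/2)·A·(b̂_j − â_j) for all j ≥ 0, and |â_j|² + |b̂_j|² + |d̂_j|² → 0 as j → ∞. Then for every j ≥ 0: â_j = φs^j·â_0, b̂_j = Q·â_j, and d̂_j = (iλx(Q−1)A/(2(A−1)))·â_j. -/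
open Complex Filter Topology

/-!
Eliminating `d̂` through its equation turns the other two into the first-order recursion
`R âⱼ₊₁ + θ b̂ⱼ₊₁ = âⱼ`, `b̂ⱼ₊₁ = θ âⱼ + R b̂ⱼ`, whose transfer matrix has eigenvalues `φs, φb`.
The combination `(R - φb) âⱼ + θ b̂ⱼ` is then multiplied by `φb` at each step; as it tends to `0`
and `|φb| > 1` it vanishes identically, which is `b̂ = Q â`. Substituting back into the first
recursion gives `φb âⱼ₊₁ = âⱼ`, i.e. `âⱼ₊₁ = φs âⱼ`.
-/

theorem eq_pow_mul_of_succ_eq_mul {M : Type*} [Monoid M] {c : M} {u : ℕ → M}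
    (hu : ∀ j, u (j + 1) = c * u j) (j : ℕ) : u j = c ^ j * u 0 := by
  induction j with
  | zero => rw [pow_zero, one_mul]
  | succ j ih => rw [hu j, ih, pow_succ', mul_assoc]

theorem eq_zero_of_succ_eq_mul_of_tendsto_zero {𝕜 : Type*} [NormedDivisionRing 𝕜] {c : 𝕜}
    (hc : 1 < ‖c‖) {w : ℕ → 𝕜} (hw : ∀ j, w (j + 1) = c * w j)
    (hlim : Tendsto w atTop (𝓝 0)) (j : ℕ) : w j = 0 := by
  have hw0 : ‖w 0‖ ≤ 0 := by
    refine ge_of_tendsto' (by simpa using hlim.norm) fun j => ?_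
    rw [eq_pow_mul_of_succ_eq_mul hw j, norm_mul, norm_pow]
    exact le_mul_of_one_le_left (norm_nonneg _) (one_le_pow₀ hc.le)
  rw [eq_pow_mul_of_succ_eq_mul hw j, norm_le_zero_iff.mp hw0, mul_zero]

theorem tendsto_zero_of_sq_norm_le {α E : Type*} [SeminormedAddCommGroup E] {l : Filter α}
    {f : α → E} {g : α → ℝ} (hg : Tendsto g l (𝓝 0)) (hf : ∀ x, ‖f x‖ ^ 2 ≤ g x) :
    Tendsto f l (𝓝 0) :=
  squeeze_zero_norm (fun x => (le_abs_self _).trans (Real.abs_le_sqrt (hf x)))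
    (by simpa using hg.sqrt)

/-- The row vector `(R - φ, θ)` is a left eigenvector, for the eigenvalue `φ`, of the transfer
matrix `K` of the recursion `(aⱼ, bⱼ) ↦ (aⱼ₊₁, bⱼ₊₁)`. -/
theorem transfer_mode_succ {F : Type*} [Field F] {R θ B φ : F} (hR : R ≠ 0)
    (hB : 2 * B * R = R ^ 2 + 1 - θ ^ 2) (hφ : φ ^ 2 - 2 * B * φ + 1 = 0) {a b : ℕ → F}
    (hI : ∀ j, R * a (j + 1) + θ * b (j + 1) = a j) (hII : ∀ j, b (j + 1) = θ * a j + R * b j)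
    (j : ℕ) :
    (R - φ) * a (j + 1) + θ * b (j + 1) = φ * ((R - φ) * a j + θ * b j) := by
  refine mul_left_cancel₀ hR ?_
  linear_combination (R - φ) * hI j + φ * θ * hII j + R * a j * hφ + φ * a j * hB

section Upwind

variable {A lx ly θ R : ℂ} {a b d : ℕ → ℂ}

theorem upwind_d_eq (hA : A ≠ 1) (hd : ∀ j, A * d j = d j + (I * lx / 2) * A * (b j - a j))
    (j : ℕ) : d j = I * lx * A / (2 * (A - 1)) * (b j - a j) := by
  field_simp
  linear_combination 2 * hd j

theorem upwind_first_recursion (hA : A ≠ 1) (hly : ly ≠ 0)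
    (hθ : θ = -(A * lx ^ 2) / (2 * ly * (A - 1))) (hR : R = (A - 1 + ly) / ly - θ)
    (ha : ∀ j, A * a (j + 1) = a (j + 1) - ly * (a (j + 1) - a j) - I * lx * d (j + 1))
    (hd : ∀ j, A * d j = d j + (I * lx / 2) * A * (b j - a j)) (j : ℕ) :
    R * a (j + 1) + θ * b (j + 1) = a j := by
  subst hR hθ
  field_simp
  linear_combination 2 * (A - 1) * ha j - 2 * I * lx * hd (j + 1)
    + A * lx ^ 2 * (a (j + 1) - b (j + 1)) * I_sq

theorem upwind_second_recursion (hA : A ≠ 1) (hly : ly ≠ 0)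
    (hθ : θ = -(A * lx ^ 2) / (2 * ly * (A - 1))) (hR : R = (A - 1 + ly) / ly - θ)
    (hb : ∀ j, A * b j = b j + ly * (b (j + 1) - b j) + I * lx * d j)
    (hd : ∀ j, A * d j = d j + (I * lx / 2) * A * (b j - a j)) (j : ℕ) :
    b (j + 1) = θ * a j + R * b j := by
  subst hR hθ
  field_simp
  linear_combination -2 * (A - 1) * hb j - 2 * I * lx * hd j
    + A * lx ^ 2 * (a j - b j) * I_sq

end Upwind

theorem decaying_normal_mode_structure_general (A lx ly : ℂ) (hA : A ≠ 1) (hly : ly ≠ 0)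
    (r θ R B : ℂ)
    (hr : r = (A - 1 + ly) / ly)
    (hθ : θ = -(A * lx ^ 2) / (2 * ly * (A - 1)))
    (hR : R = r - θ)
    (hB : B = (R + (1 - θ ^ 2) / R) / 2)
    (hθne : θ ≠ 0) (hRne : R ≠ 0)
    (φs φb : ℂ)
    (hsum : φs + φb = 2 * B) (hprod : φs * φb = 1)
    (hφb : 1 < ‖φb‖)
    (Q : ℂ) (hQ : Q = (φb - R) / θ)
    (a b d : ℕ → ℂ)
    (ha : ∀ j : ℕ, A * a (j + 1) = a (j + 1) - ly * (a (j + 1) - a j) - I * lx * d (j + 1))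
    (hb : ∀ j : ℕ, A * b j = b j + ly * (b (j + 1) - b j) + I * lx * d j)
    (hd : ∀ j : ℕ, A * d j = d j + (I * lx / 2) * A * (b j - a j))
    (hdecay : Tendsto
      (fun j : ℕ => ‖a j‖ ^ 2 + ‖b j‖ ^ 2 + ‖d j‖ ^ 2)
      atTop (nhds 0)) :
    ∀ j : ℕ,
      a j = φs ^ j * a 0 ∧
      b j = Q * a j ∧
      d j = (I * lx * (Q - 1) * A / (2 * (A - 1))) * a j := by
  rw [hr] at hR
  have hI := upwind_first_recursion hA hly hθ hR ha hd
  have hII := upwind_second_recursion hA hly hθ hR hb hd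
  have hBR : 2 * B * R = R ^ 2 + 1 - θ ^ 2 := by rw [hB]; field_simp; ring
  have hφb_root : φb ^ 2 - 2 * B * φb + 1 = 0 := by linear_combination φb * hsum - hprod
  have hmode_lim : Tendsto (fun j => (R - φb) * a j + θ * b j) atTop (𝓝 0) := by
    have ha_lim := tendsto_zero_of_sq_norm_le (f := a) hdecay fun j => by
      linarith [sq_nonneg ‖b j‖, sq_nonneg ‖d j‖]
    have hb_lim := tendsto_zero_of_sq_norm_le (f := b) hdecay fun j => by
      linarith [sq_nonneg ‖a j‖, sq_nonneg ‖d j‖]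
    simpa using (ha_lim.const_mul (R - φb)).add (hb_lim.const_mul θ)
  have hmode := eq_zero_of_succ_eq_mul_of_tendsto_zero hφb
    (transfer_mode_succ hRne hBR hφb_root hI hII) hmode_lim
  have hbQ (j : ℕ) : b j = Q * a j := by
    rw [hQ]; field_simp; linear_combination hmode j
  have has (j : ℕ) : a (j + 1) = φs * a j := by
    have hI' := hI j
    rw [hbQ, hQ] at hI'
    field_simp at hI'
    linear_combination -(a (j + 1)) * hprod + φs * hI'
  refine fun j => ⟨eq_pow_mul_of_succ_eq_mul has j, hbQ j, ?_⟩
  rw [upwind_d_eq hA hd, hbQ]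
  ring

/-- structure of the decaying normal-mode solutions of the
upwind-discretized acoustic solid: `â_j = φs^j â_0`, `b̂_j = Q â_j`, and
`d̂_j = (iλx(Q−1)A/(2(A−1))) â_j`.  Here `lx = λx = c̄_p·k·Δt` and
`ly = λy = c̄_p·Δt/Δy`. -/
theorem decaying_normal_mode_structure (A lx ly : ℂ) (hA : A ≠ 1) (hly : ly ≠ 0)
    (r θ R B : ℂ)
    (hr : r = (A - 1 + ly) / ly)
    (hθ : θ = -(A * lx ^ 2) / (2 * ly * (A - 1)))
    (hR : R = r - θ)
    (hB : B = (R + (1 - θ ^ 2) / R) / 2)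
    (hθne : θ ≠ 0) (hRne : R ≠ 0)
    (φs φb : ℂ)
    (hsum : φs + φb = 2 * B) (hprod : φs * φb = 1)
    (hφs : ‖φs‖ < 1) (hφb : 1 < ‖φb‖)
    (Q : ℂ) (hQ : Q = (φb - R) / θ)
    (a b d : ℕ → ℂ)
    (ha : ∀ j : ℕ, A * a (j + 1) = a (j + 1) - ly * (a (j + 1) - a j) - I * lx * d (j + 1))
    (hb : ∀ j : ℕ, A * b j = b j + ly * (b (j + 1) - b j) + I * lx * d j)
    (hd : ∀ j : ℕ, A * d j = d j + (I * lx / 2) * A * (b j - a j))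
    (hdecay : Tendsto
      (fun j : ℕ => ‖a j‖ ^ 2 + ‖b j‖ ^ 2 + ‖d j‖ ^ 2)
      atTop (nhds 0)) :
    ∀ j : ℕ,
      a j = φs ^ j * a 0 ∧
      b j = Q * a j ∧
      d j = (I * lx * (Q - 1) * A / (2 * (A - 1))) * a j :=
  decaying_normal_mode_structure_general A lx ly hA hly r θ R B hr hθ hR hB hθne hRne φs φb hsum
    hprod hφb Q hQ a b d ha hb hd hdecay
end

section
/- Let A, λx, λy, η be complex numbers with A ≠ 0, A ≠ 1, and λy ≠ 0; set r = (A−1+λy)/λy, θ = −A·λx²/(2·λy·(A−1)), R = r − θ, B = (R + (1−θ²)/R)/2, and assume θ ≠ 0 and R ≠ 0. Suppose φ is a complex number with |φ| < 1 satisfying φ² − 2Bφ + 1 = 0 and A − η − ((2η−1)A − η)·(1 − Rφ)/θ = 0. Then P_AMP(A) = 0, where P_AMP(A) = α₅A⁵ + α₄A⁴ + α₃A³ + α₂A² + α₁A + α₀ with α₀ = −η² + 2η²λy, α₁ = −8η²λy + 5η² − λx²η², α₂ = 10η²λy − 9η² + 1 + 3λx²η² + 4ηλy − 2η − 2λy,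 α₃ = −2λyλx² − 2ηλx² + 4λy + λx² + 4ηλyλx² + 7η² − 3 + 6η − 4η²λy − 8ηλy − 2η²λyλx² − 2λx²η², α₄ = 3 − 2λy − 2η² − λx² + 4ηλy − 6η + 2ηλx², α₅ = −1 + 2η. -/
/-!
Write `P = A - η` and `Q = (2η - 1)A - η`. The stability condition says `Q R φ = Q - P θ`.
Multiplied by `Q² R²`, and with `2 B R = R² + 1 - θ²`, the characteristic equation of `φ` becomes
an equation in `Q R φ` alone; substituting `Q - P θ` eliminates `φ`, the result is divisible by
`θ`, and the quotient `P Q (R² - θ² - 1) + (P² + Q²) θ` vanishes. Clearing the denominators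
`λy² (A - 1)` of `r` and `θ` in this quotient gives exactly `P_AMP(A)`.
-/

/-- The quintic stability polynomial `P_AMP`, evaluated at `A`. -/
def ampStabilityPoly {K : Type*} [CommRing K] (A lx ly η : K) : K :=
  (-1 + 2 * η) * A ^ 5
    + (3 - 2 * ly - 2 * η ^ 2 - lx ^ 2 + 4 * η * ly - 6 * η + 2 * η * lx ^ 2) * A ^ 4
    + (-2 * ly * lx ^ 2 - 2 * η * lx ^ 2 + 4 * ly + lx ^ 2 + 4 * η * ly * lx ^ 2
        + 7 * η ^ 2 - 3 + 6 * η - 4 * η ^ 2 * ly - 8 * η * ly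
        - 2 * η ^ 2 * ly * lx ^ 2 - 2 * lx ^ 2 * η ^ 2) * A ^ 3
    + (10 * η ^ 2 * ly - 9 * η ^ 2 + 1 + 3 * lx ^ 2 * η ^ 2 + 4 * η * ly
        - 2 * η - 2 * ly) * A ^ 2
    + (-8 * η ^ 2 * ly + 5 * η ^ 2 - lx ^ 2 * η ^ 2) * A
    + (-η ^ 2 + 2 * η ^ 2 * ly)

section
variable {K : Type*} [Field K]

theorem eliminant_eq_zero_of_charpoly {P Q R θ B φ : K} (hθ : θ ≠ 0)
    (hBR : 2 * B * R = R ^ 2 + 1 - θ ^ 2) (hφ : φ ^ 2 - 2 * B * φ + 1 = 0)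
    (hcoupling : P * θ = Q * (1 - R * φ)) :
    P * Q * (R ^ 2 - θ ^ 2 - 1) + (P ^ 2 + Q ^ 2) * θ = 0 := by
  refine (mul_eq_zero.mp ?_).resolve_left hθ
  linear_combination Q ^ 2 * R ^ 2 * hφ + Q ^ 2 * R * φ * hBR
    - (Q - P * θ + Q * R * φ - (R ^ 2 + 1 - θ ^ 2) * Q) * hcoupling

theorem mul_eliminant_eq_ampStabilityPoly [CharZero K] {A lx ly η r θ R : K}
    (hA1 : A ≠ 1) (hly : ly ≠ 0)
    (hr : r = (A - 1 + ly) / ly) (hθ : θ = -(A * lx ^ 2) / (2 * ly * (A - 1)))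
    (hR : R = r - θ) :
    2 * ly ^ 2 * (A - 1) * ((A - η) * ((2 * η - 1) * A - η) * (R ^ 2 - θ ^ 2 - 1)
      + ((A - η) ^ 2 + ((2 * η - 1) * A - η) ^ 2) * θ) = 2 * ampStabilityPoly A lx ly η := by
  have hA1' : A - 1 ≠ 0 := sub_ne_zero.mpr hA1
  subst hR hr hθ
  unfold ampStabilityPoly
  field_simp
  ring

end

theorem amp_root_is_polynomial_root_general (A lx ly η : ℂ)
    (hA1 : A ≠ 1) (hly : ly ≠ 0)
    (r θ R B : ℂ)
    (hr : r = (A - 1 + ly) / ly)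
    (hθ : θ = -(A * lx ^ 2) / (2 * ly * (A - 1)))
    (hR : R = r - θ)
    (hB : B = (R + (1 - θ ^ 2) / R) / 2)
    (hθne : θ ≠ 0) (hRne : R ≠ 0)
    (φ : ℂ)
    (hφ : φ ^ 2 - 2 * B * φ + 1 = 0)
    (hf : A - η - ((2 * η - 1) * A - η) * ((1 - R * φ) / θ) = 0) :
    (-1 + 2 * η) * A ^ 5
      + (3 - 2 * ly - 2 * η ^ 2 - lx ^ 2 + 4 * η * ly - 6 * η + 2 * η * lx ^ 2) * A ^ 4
      + (-2 * ly * lx ^ 2 - 2 * η * lx ^ 2 + 4 * ly + lx ^ 2 + 4 * η * ly * lx ^ 2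
          + 7 * η ^ 2 - 3 + 6 * η - 4 * η ^ 2 * ly - 8 * η * ly
          - 2 * η ^ 2 * ly * lx ^ 2 - 2 * lx ^ 2 * η ^ 2) * A ^ 3
      + (10 * η ^ 2 * ly - 9 * η ^ 2 + 1 + 3 * lx ^ 2 * η ^ 2 + 4 * η * ly
          - 2 * η - 2 * ly) * A ^ 2
      + (-8 * η ^ 2 * ly + 5 * η ^ 2 - lx ^ 2 * η ^ 2) * A
      + (-η ^ 2 + 2 * η ^ 2 * ly) = 0 := by
  show ampStabilityPoly A lx ly η = 0
  have hcoupling : (A - η) * θ = ((2 * η - 1) * A - η) * (1 - R * φ) := by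
    rw [sub_eq_zero, mul_div_assoc', eq_div_iff hθne] at hf
    exact hf
  have hBR : 2 * B * R = R ^ 2 + 1 - θ ^ 2 := by
    rw [hB]; field_simp; ring
  have hpoly := mul_eliminant_eq_ampStabilityPoly (η := η) hA1 hly hr hθ hR
  rw [eliminant_eq_zero_of_charpoly hθne hBR hφ hcoupling, mul_zero] at hpoly
  exact (mul_eq_zero.mp hpoly.symm).resolve_left two_ne_zero

/-- any root of the AMP stability function `f(A) = 0` (with
`Qφs = (1 − Rφ)/θ` and `φ` the eigenvalue of modulus less than one) is a root
of the explicit quintic stability polynomial `P_AMP`.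
Here `lx = λx = c̄_p·k·Δt` and `ly = λy = c̄_p·Δt/Δy`. -/
theorem amp_root_is_polynomial_root (A lx ly η : ℂ)
    (hA0 : A ≠ 0) (hA1 : A ≠ 1) (hly : ly ≠ 0)
    (r θ R B : ℂ)
    (hr : r = (A - 1 + ly) / ly)
    (hθ : θ = -(A * lx ^ 2) / (2 * ly * (A - 1)))
    (hR : R = r - θ)
    (hB : B = (R + (1 - θ ^ 2) / R) / 2)
    (hθne : θ ≠ 0) (hRne : R ≠ 0)
    (φ : ℂ) (hφabs : ‖φ‖ < 1)
    (hφ : φ ^ 2 - 2 * B * φ + 1 = 0)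
    (hf : A - η - ((2 * η - 1) * A - η) * ((1 - R * φ) / θ) = 0) :
    (-1 + 2 * η) * A ^ 5
      + (3 - 2 * ly - 2 * η ^ 2 - lx ^ 2 + 4 * η * ly - 6 * η + 2 * η * lx ^ 2) * A ^ 4
      + (-2 * ly * lx ^ 2 - 2 * η * lx ^ 2 + 4 * ly + lx ^ 2 + 4 * η * ly * lx ^ 2
          + 7 * η ^ 2 - 3 + 6 * η - 4 * η ^ 2 * ly - 8 * η * ly
          - 2 * η ^ 2 * ly * lx ^ 2 - 2 * lx ^ 2 * η ^ 2) * A ^ 3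
      + (10 * η ^ 2 * ly - 9 * η ^ 2 + 1 + 3 * lx ^ 2 * η ^ 2 + 4 * η * ly
          - 2 * η - 2 * ly) * A ^ 2
      + (-8 * η ^ 2 * ly + 5 * η ^ 2 - lx ^ 2 * η ^ 2) * A
      + (-η ^ 2 + 2 * η ^ 2 * ly) = 0 :=
  amp_root_is_polynomial_root_general A lx ly η hA1 hly r θ R B hr hθ hR hB hθne hRne φ hφ hf
end

section
/- Let M and λy be real numbers with M > 0 and λy > 0. Every complex root A of the quadratic polynomial A² + (M + λy − 1)·A − M satisfies |A| ≤ 1 if and only if λy ≤ 2(1 − M). -/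
/-!
The discriminant `b² + 4c` of `X² + bX - c` is positive when `c > 0`, so both roots are real,
one positive and one negative (their product is `-c`). The positive root is at most `1` exactly
when `p(1) = 1 + b - c ≥ 0`, the negative one at least `-1` exactly when `p(-1) = 1 - b - c ≥ 0`.
For the TP polynomial `p(1) = λy > 0` and `p(-1) = 2(1 - M) - λy`.
-/

open Complex

section QuadraticNegConst

variable {b c : ℝ}

theorem quadratic_eq_zero_iff_of_discrim_nonneg (hd : 0 ≤ b ^ 2 + 4 * c) (A : ℂ) :
    A ^ 2 + b * A - c = 0 ↔
      A = ((-b + √(b ^ 2 + 4 * c)) / 2 : ℝ) ∨ A = ((-b - √(b ^ 2 + 4 * c)) / 2 : ℝ) := by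
  have hs : discrim (1 : ℂ) b (-c) = (√(b ^ 2 + 4 * c) : ℂ) * √(b ^ 2 + 4 * c) := by
    rw [← ofReal_mul, Real.mul_self_sqrt hd, discrim]
    push_cast
    ring
  convert quadratic_eq_zero_iff one_ne_zero hs A using 1
  · ring_nf
  · push_cast
    ring_nf

theorem abs_lt_sqrt_discrim (hc : 0 < c) : |b| < √(b ^ 2 + 4 * c) := by
  rw [← Real.sqrt_sq_eq_abs]
  exact Real.sqrt_lt_sqrt (sq_nonneg b) (by linarith)

theorem abs_quadratic_root_add_le_one_iff (hc : 0 < c) :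
    |(-b + √(b ^ 2 + 4 * c)) / 2| ≤ 1 ↔ c ≤ 1 + b := by
  have hs := abs_lt_sqrt_discrim (b := b) hc
  rw [abs_of_pos (by linarith [le_abs_self b]), div_le_one two_pos, neg_add_le_iff_le_add,
    Real.sqrt_le_iff]
  constructor
  · rintro ⟨-, h⟩
    nlinarith
  · intro h
    constructor <;> nlinarith

theorem abs_quadratic_root_sub_le_one_iff (hc : 0 < c) :
    |(-b - √(b ^ 2 + 4 * c)) / 2| ≤ 1 ↔ c ≤ 1 - b := by
  have hs := abs_lt_sqrt_discrim (b := b) hc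
  rw [abs_of_neg (by linarith [neg_abs_le b]), neg_le, le_div_iff₀ two_pos, le_sub_iff_add_le,
    ← le_sub_iff_add_le', Real.sqrt_le_iff]
  constructor
  · rintro ⟨-, h⟩
    nlinarith
  · intro h
    constructor <;> nlinarith

theorem forall_quadratic_roots_norm_le_one_iff (hc : 0 < c) :
    (∀ A : ℂ, A ^ 2 + b * A - c = 0 → ‖A‖ ≤ 1) ↔ c + |b| ≤ 1 := by
  simp only [quadratic_eq_zero_iff_of_discrim_nonneg (by positivity : 0 ≤ b ^ 2 + 4 * c),
    forall_eq_or_imp, forall_eq, norm_real, Real.norm_eq_abs,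
    abs_quadratic_root_add_le_one_iff hc, abs_quadratic_root_sub_le_one_iff hc]
  rw [← le_sub_iff_add_le', abs_le]
  constructor <;> rintro ⟨h₁, h₂⟩ <;> constructor <;> linarith

end QuadraticNegConst

/-- every complex root of the TP amplification polynomial
`A² + (M + λy − 1)A − M` has modulus at most one iff `λy ≤ 2(1 − M)`.
Here `ly = λy = c̄_p·Δt/Δy` and `M = ρH/(ρ̄Δy)`. -/
theorem tp_1d_stability (M ly : ℝ) (hM : 0 < M) (hly : 0 < ly) :
    (∀ A : ℂ, A ^ 2 + ((M : ℂ) + (ly : ℂ) - 1) * A - (M : ℂ) = 0 → ‖A‖ ≤ 1) ↔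
      ly ≤ 2 * (1 - M) := by
  have h := forall_quadratic_roots_norm_le_one_iff (b := M + ly - 1) hM
  push_cast at h
  rw [h, ← le_sub_iff_add_le', abs_le]
  constructor
  · rintro ⟨-, h⟩
    linarith
  · intro h
    constructor <;> linarith
end

section
/- Let M and λy be real numbers with M > 0 and λy > 0. Every complex root A of the quadratic polynomial A² + ((λy/2)(1 + λy/M) − 2)·A + (1 − λy/2) satisfies |A| ≤ 1 if and only if λy ≤ 4 and λy ≤ √(M² + 8M) − M. -/
/-! A real monic quadratic `z² + b z + c` has all its complex roots in the closed unit disc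
iff `|c| ≤ 1` and `|b| ≤ 1 + c` (the Schur–Cohn–Jury conditions). Necessity: `c` is the product
of the two roots, and if `p(1) = 1 + b + c` or `p(-1) = 1 - b + c` were negative, `p` would have a
real root beyond `±1`. Sufficiency: a real root is trapped in `[-1, 1]` by the signs of `p(±1)`,
while a non-real root `z` has `|z|² = z z̄ = c`.

For the anti-traditional polynomial, `1 + b + c = λy² / (2M) ≥ 0` and `c = 1 - λy/2 ≤ 1` hold
automatically, `c ≥ -1` is `λy ≤ 4`, and `1 - b + c ≥ 0` is `λy² + 2Mλy ≤ 8M`, i.e.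
`λy ≤ √(M² + 8M) - M`. -/

open Complex

theorem exists_roots_lt_lt_of_quadratic_neg {b c x₀ : ℝ} (h : x₀ ^ 2 + b * x₀ + c < 0) :
    ∃ x y : ℝ, x ^ 2 + b * x + c = 0 ∧ y ^ 2 + b * y + c = 0 ∧ x < x₀ ∧ x₀ < y := by
  have hD : 0 ≤ b ^ 2 - 4 * c := by nlinarith [sq_nonneg (2 * x₀ + b)]
  set s := √(b ^ 2 - 4 * c)
  have hs : s ^ 2 = b ^ 2 - 4 * c := Real.sq_sqrt hD
  have hlt : |2 * x₀ + b| < s := abs_lt_of_sq_lt_sq (by nlinarith) (Real.sqrt_nonneg _)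
  refine ⟨(-b - s) / 2, (-b + s) / 2, by linear_combination hs / 4, by linear_combination hs / 4,
    ?_, ?_⟩ <;> linarith [abs_lt.mp hlt]

theorem Complex.normSq_eq_of_quadratic_eq_zero {b c : ℝ} {z : ℂ}
    (hz : z ^ 2 + b * z + c = 0) (him : z.im ≠ 0) : normSq z = c := by
  have hre : z.re ^ 2 - z.im ^ 2 + b * z.re + c = 0 := by
    simpa [sq] using congrArg re hz
  have h_im : z.re * z.im + z.im * z.re + b * z.im = 0 := by
    simpa [sq] using congrArg im hz
  have hsum : 2 * z.re + b = 0 := by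
    refine (mul_eq_zero.mp ?_).resolve_right him
    linear_combination h_im
  rw [normSq_apply]
  linear_combination z.re * hsum - hre

theorem abs_le_one_of_quadratic_eq_zero {b c x : ℝ} (hx : x ^ 2 + b * x + c = 0)
    (hc : c ≤ 1) (hb : |b| ≤ 1 + c) : |x| ≤ 1 := by
  rw [abs_le] at hb ⊢
  constructor <;> nlinarith

theorem norm_le_one_of_quadratic_eq_zero {b c : ℝ} {z : ℂ} (hz : z ^ 2 + b * z + c = 0)
    (hc : c ≤ 1) (hb : |b| ≤ 1 + c) : ‖z‖ ≤ 1 := by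
  by_cases him : z.im = 0
  · obtain ⟨x, rfl⟩ : ∃ x : ℝ, (x : ℂ) = z := ⟨z.re, Complex.ext rfl him.symm⟩
    rw [norm_real, Real.norm_eq_abs]
    exact abs_le_one_of_quadratic_eq_zero (by exact_mod_cast hz) hc hb
  · rw [← sq_le_one_iff₀ (norm_nonneg z), ← normSq_eq_norm_sq,
      normSq_eq_of_quadratic_eq_zero hz him]
    exact hc

theorem quadratic_roots_norm_le_one_iff (b c : ℝ) :
    (∀ z : ℂ, z ^ 2 + b * z + c = 0 → ‖z‖ ≤ 1) ↔ |c| ≤ 1 ∧ |b| ≤ 1 + c := by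
  constructor
  · intro H
    have real_root (x : ℝ) (hx : x ^ 2 + b * x + c = 0) : |x| ≤ 1 := by
      simpa using H x (by exact_mod_cast hx)
    have hb : |b| ≤ 1 + c := by
      rw [abs_le]
      constructor <;> by_contra! hneg
      · obtain ⟨-, y, -, hy, -, hlt⟩ :=
          exists_roots_lt_lt_of_quadratic_neg (x₀ := 1) (b := b) (c := c) (by linarith)
        linarith [(abs_le.mp (real_root y hy)).2]
      · obtain ⟨x, -, hx, -, hlt, -⟩ :=
          exists_roots_lt_lt_of_quadratic_neg (x₀ := -1) (b := b) (c := c) (by linarith)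
        linarith [(abs_le.mp (real_root x hx)).1]
    obtain ⟨z, hz⟩ :=
      exists_quadratic_eq_zero one_ne_zero (IsAlgClosed.exists_eq_mul_self (discrim 1 (b : ℂ) c))
    have hw : (-b - z) ^ 2 + b * (-b - z) + c = 0 := by linear_combination hz
    have hc : ‖(c : ℂ)‖ ≤ 1 := by
      rw [show (c : ℂ) = z * (-b - z) by linear_combination hz, norm_mul]
      exact mul_le_one₀ (H z (by linear_combination hz)) (norm_nonneg _) (H _ hw)
    exact ⟨by simpa using hc, hb⟩
  · rintro ⟨hc, hb⟩ z hz
    exact norm_le_one_of_quadratic_eq_zero hz (abs_le.mp hc).2 hb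

theorem le_sqrt_sq_add_sub_iff {x a k : ℝ} (h : 0 < x + a) :
    x ≤ √(a ^ 2 + k) - a ↔ x ^ 2 + 2 * a * x ≤ k := by
  rw [le_sub_iff_add_le, Real.le_sqrt' h]
  constructor <;> intro h <;> nlinarith

/-- every complex root of the anti-traditional amplification
polynomial `A² + ((λy/2)(1 + λy/M) − 2)A + (1 − λy/2)` has modulus at most one
iff `λy ≤ 4` and `λy ≤ √(M² + 8M) − M`.
Here `ly = λy = c̄_p·Δt/Δy` and `M = ρH/(ρ̄Δy)`. -/
theorem at_1d_stability (M ly : ℝ) (hM : 0 < M) (hly : 0 < ly) :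
    (∀ A : ℂ,
        A ^ 2 + (((ly : ℂ) / 2) * (1 + (ly : ℂ) / (M : ℂ)) - 2) * A + (1 - (ly : ℂ) / 2) = 0 →
          ‖A‖ ≤ 1) ↔
      (ly ≤ 4 ∧ ly ≤ Real.sqrt (M ^ 2 + 8 * M) - M) := by
  set b := ly / 2 * (1 + ly / M) - 2 with hb
  set c := 1 - ly / 2 with hc
  have hcoef (A : ℂ) :
      A ^ 2 + (((ly : ℂ) / 2) * (1 + (ly : ℂ) / (M : ℂ)) - 2) * A + (1 - (ly : ℂ) / 2) =
        A ^ 2 + (b : ℂ) * A + (c : ℂ) := by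
    push_cast [b, c]; ring
  have hp_one : -(1 + c) ≤ b := by
    rw [← sub_nonneg, show b - -(1 + c) = ly ^ 2 / (2 * M) by rw [hb, hc]; field_simp; ring]
    positivity
  have hp_neg_one : b ≤ 1 + c ↔ ly ^ 2 + 2 * M * ly ≤ 8 * M := by
    rw [← sub_nonneg, show 1 + c - b = (8 * M - (ly ^ 2 + 2 * M * ly)) / (2 * M) by
      rw [hb, hc]; field_simp; ring, le_div_iff₀ (by positivity), zero_mul, sub_nonneg]
  simp_rw [hcoef, quadratic_roots_norm_le_one_iff, abs_le, hp_neg_one,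
    le_sqrt_sq_add_sub_iff (by linarith : 0 < ly + M)]
  constructor
  · rintro ⟨⟨hc_ge, -⟩, -, h⟩
    exact ⟨by linarith, h⟩
  · rintro ⟨h4, h⟩
    exact ⟨⟨by linarith, by linarith⟩, hp_one, h⟩
end
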